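/- arXiv:2302.00959 — 5 statements merged into one kernel-verified Lean document; each statement's English description precedes it below -/
import Mathlib

section
/- Let a, b, c be nonnegative integers. The determinant of the a×a matrix over ℚ whose (i,j)-entry (for i, j ∈ {1,…,a}) is the binomial coefficient C(b+c, b−i+j) equals MacMahon's product M(a,b,c) = ∏_{i=0}^{a−1} i!·(b+c+i)!/((b+i)!·(c+i)!). (This is MacMahon's formula for the number of lozenge tilings of the (a,b,c)-hexagon.) -/
open Finset

noncomputable section

/-- Binomial coefficient with integer arguments, equal to `0` whenever `k < 0` or `k > n`. -/
def ibinom (n k : ℤ) : ℚ :=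
  if 0 ≤ k ∧ k ≤ n then (n.toNat.choose k.toNat : ℚ) else 0

/-- The Pochhammer symbol (rising factorial) `x (x+1) ⋯ (x+n-1)`. -/
def poch (x : ℚ) (n : ℕ) : ℚ := (ascPochhammer ℚ n).eval x

/-- MacMahon's product `M(a,b,c)`. -/
def macmahon (a b c : ℕ) : ℚ :=
  ∏ i ∈ Finset.range a,
    ((Nat.factorial i : ℚ) * (Nat.factorial (b + c + i) : ℚ)) /
      ((Nat.factorial (b + i) : ℚ) * (Nat.factorial (c + i) : ℚ))

/-- The matrix `Q(a,b,c,d,p)` (with `1`-based indices `i, j ∈ {1, …, a+d}`):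
rows/columns with index `≤ a` are lateral, the rest are intrusive. -/
def Qmat (a b c d : ℕ) (p : ℤ) : Matrix (Fin (a + d)) (Fin (a + d)) ℚ :=
  Matrix.of fun i j =>
    if (i : ℕ) < a then
      if (j : ℕ) < a then
        ibinom ((b : ℤ) + c) ((c : ℤ) - (((i : ℕ) : ℤ) + 1) + (((j : ℕ) : ℤ) + 1))
      else
        ibinom (2 * (((j : ℕ) : ℤ) - a + 1) - 1)
          ((((j : ℕ) : ℤ) - a + 1) - (((i : ℕ) : ℤ) + 1) + p)
    else
      if (j : ℕ) < a then
        ibinom ((b : ℤ) + c - 2 * (((i : ℕ) : ℤ) - a + 1) + 1)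
          ((c : ℤ) - (((i : ℕ) : ℤ) - a + 1) + (((j : ℕ) : ℤ) + 1) - p)
      else
        ibinom (2 * (((j : ℕ) : ℤ) - ((i : ℕ) : ℤ))) (((j : ℕ) : ℤ) - ((i : ℕ) : ℤ))

/-- `E(a,b,c,d,p) = det Q(a,b,c,d,p)`, the signed count of lozenge tilings of the
`(a,b,c)`-hexagon with an even intrusion of length `d` at position `p`. -/
def E (a b c d : ℕ) (p : ℤ) : ℚ := (Qmat a b c d p).det

/-!
Multiplying the matrix `(C(b+c, b+j-i))` on the left by the unitriangular Pascal matrix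
`(C(i,k))` turns it, by Vandermonde's convolution, into `(C(b+c+i, b+j))`. Taking the factor
`(b+c+i)!/(c+i)!` out of row `i` and `1/(b+j)!` out of column `j` leaves the matrix of falling
factorials `(c+i)(c+i-1)⋯(c+i-j+1)`, whose determinant is the Vandermonde determinant of
`c, c+1, …, c+a-1`, namely `∏_{i<a} i!`.
-/

open Matrix Nat

lemma ibinom_natCast (n k : ℕ) : ibinom n k = n.choose k := by
  unfold ibinom
  rcases le_or_gt k n with h | h
  · rw [if_pos ⟨by positivity, by exact_mod_cast h⟩, Int.toNat_natCast, Int.toNat_natCast]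
  · rw [if_neg (by omega), Nat.choose_eq_zero_of_lt h, Nat.cast_zero]

lemma ibinom_of_neg (n : ℤ) {k : ℤ} (hk : k < 0) : ibinom n k = 0 :=
  if_neg (by omega)

def pascalMatrix (R : Type*) [CommRing R] (a : ℕ) : Matrix (Fin a) (Fin a) R :=
  of fun i k => ((i : ℕ).choose k : R)

lemma det_pascalMatrix (R : Type*) [CommRing R] (a : ℕ) : (pascalMatrix R a).det = 1 := by
  rw [det_of_isLowerTriangular _ fun i k hik => by
    simp [pascalMatrix, Nat.choose_eq_zero_of_lt (show (i : ℕ) < k from hik)]]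
  simp [pascalMatrix]

lemma sum_choose_mul_ibinom (n m : ℕ) {i a : ℕ} (hi : i < a) :
    ∑ k ∈ range a, (i.choose k : ℚ) * ibinom n ((m : ℤ) - k) =
      ((n + i).choose m : ℚ) := by
  set f : ℕ → ℚ := fun k => (i.choose k : ℚ) * ibinom n ((m : ℤ) - k)
  have hpad_a : ∀ s, a ≤ s → ∑ k ∈ range a, f k = ∑ k ∈ range s, f k := fun s hs =>
    sum_subset (range_subset_range.mpr hs) fun k _ hk => by
      simp [f, Nat.choose_eq_zero_of_lt (show i < k by simp at hk; omega)]
  have hpad_m : ∀ s, m + 1 ≤ s → ∑ k ∈ range (m + 1), f k = ∑ k ∈ range s, f k :=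
    fun s hs => sum_subset (range_subset_range.mpr hs) fun k _ hk => by
      simp only [f]; rw [ibinom_of_neg _ (by simp at hk; omega), mul_zero]
  rw [hpad_a (a + (m + 1)) (by omega), ← hpad_m _ (by omega), add_comm n, Nat.add_choose_eq,
    Nat.sum_antidiagonal_eq_sum_range_succ_mk, Nat.cast_sum]
  refine sum_congr rfl fun k hk => ?_
  rw [mem_range] at hk
  simp only [f, Nat.cast_mul]
  rw [← Nat.cast_sub (by omega), ibinom_natCast]

lemma pascalMatrix_mul_of_ibinom (a n m : ℕ) :
    pascalMatrix ℚ a * of (fun i j : Fin a => ibinom n ((m : ℤ) + j - i)) =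
      of fun i j : Fin a => ((n + i).choose (m + j) : ℚ) := by
  ext i j
  have hsum := sum_choose_mul_ibinom n (m + j) i.isLt
  push_cast at hsum
  simp only [mul_apply, of_apply, pascalMatrix]
  rw [← hsum, ← Fin.sum_univ_eq_sum_range]

lemma cast_choose_add_add (b m j : ℕ) :
    ((b + m).choose (b + j) : ℚ) =
      ((b + m)! / m ! : ℚ) * m.descFactorial j * ((b + j)! : ℚ)⁻¹ := by
  rcases le_or_gt j m with h | h
  · rw [Nat.cast_choose ℚ (by omega : b + j ≤ b + m), ← Nat.factorial_mul_descFactorial h,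
      show b + m - (b + j) = m - j by omega]
    have : (m.descFactorial j : ℚ) ≠ 0 := by
      exact_mod_cast (Nat.descFactorial_eq_zero_iff_lt.not.mpr h.not_gt)
    push_cast
    field_simp
  · rw [Nat.choose_eq_zero_of_lt (by omega), Nat.descFactorial_eq_zero_iff_lt.mpr h]
    simp

lemma det_descPochhammer_eval_add {R : Type*} [CommRing R] [IsDomain R] (x : R) (n : ℕ) :
    (of fun i j : Fin n => (descPochhammer R j).eval (x + i)).det =
      ∏ i ∈ range n, (i ! : R) := by
  rw [← det_eval_matrixOfPolynomials_eq_det_vandermonde _ _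
    (fun j => descPochhammer_natDegree R j) (fun j => monic_descPochhammer R j)]
  simp_rw [add_comm x]
  rw [det_vandermonde_add]
  cases n with
  | zero => simp
  | succ n =>
    rw [det_vandermonde_id_eq_superFactorial, ← Nat.prod_range_succ_factorial, Nat.cast_prod]

lemma det_of_choose_add_add (a b c : ℕ) :
    (of fun i j : Fin a => ((b + c + i).choose (b + j) : ℚ)).det = macmahon a b c := by
  have hfactor : (of fun i j : Fin a => ((b + c + i).choose (b + j) : ℚ)) =
      diagonal (fun i : Fin a => ((b + c + i)! / (c + i)! : ℚ)) *
        (of fun i j : Fin a => (descPochhammer ℚ j).eval ((c : ℚ) + (i : ℕ))) *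
        diagonal (fun j : Fin a => ((b + j : ℕ)! : ℚ)⁻¹) := by
    ext i j
    rw [mul_diagonal, diagonal_mul, of_apply, of_apply, add_assoc, cast_choose_add_add,
      ← Nat.cast_add, descPochhammer_eval_eq_descFactorial]
  rw [hfactor, det_mul, det_mul, det_diagonal, det_diagonal, det_descPochhammer_eval_add,
    Fin.prod_univ_eq_prod_range (fun i => ((b + c + i)! / (c + i)! : ℚ)),
    Fin.prod_univ_eq_prod_range (fun j => ((b + j)! : ℚ)⁻¹),
    ← prod_mul_distrib, ← prod_mul_distrib, macmahon]
  refine prod_congr rfl fun i _ => ?_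
  field_simp

/-- MacMahon's formula: the determinant of the `a×a` matrix with entries `C(b+c, b-i+j)`
equals MacMahon's product. -/
theorem macmahon_det (a b c : ℕ) :
    (Matrix.of fun i j : Fin a =>
        ibinom ((b : ℤ) + c) ((b : ℤ) - (((i : ℕ) : ℤ) + 1) + (((j : ℕ) : ℤ) + 1))).det =
      macmahon a b c := by
  have hentries : (Matrix.of fun i j : Fin a =>
      ibinom ((b : ℤ) + c) ((b : ℤ) - (((i : ℕ) : ℤ) + 1) + (((j : ℕ) : ℤ) + 1))) =
      of fun i j : Fin a => ibinom (b + c : ℕ) ((b : ℤ) + j - i) := by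
    ext i j
    simp only [of_apply]
    push_cast
    ring_nf
  rw [hentries, ← one_mul (det _), ← det_pascalMatrix ℚ a, ← det_mul,
    pascalMatrix_mul_of_ibinom, det_of_choose_add_add]
end
end

section
/- Let a, b, c, d be nonnegative integers with a ≥ 2, b ≥ 1, c ≥ 1, and let p be an integer. Then E(a,b,c,d,p) · E(a−2,b,c,d,p−1) = E(a−1,b,c,d,p−1) · E(a−1,b,c,d,p) − E(a−1,b+1,c−1,d,p−1) · E(a−1,b−1,c+1,d,p). -/
open Finset

noncomputable section

/-!
The identity is Dodgson condensation (Desnanot–Jacobi) applied to `Q(a,b,c,d,p)` after moving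
its first and last lateral rows and columns to the two ends. The entries of `Q` depend on the
lateral indices `i, j` only through `c - i + j` and `p - i`, so deleting the first lateral row
turns `(b, c, p)` into `(b + 1, c - 1, p - 1)` and deleting the first lateral column turns
`(b, c)` into `(b - 1, c + 1)`; the five minors in Desnanot–Jacobi are therefore the five
determinants of the identity, the two mixed ones up to the same sign. Desnanot–Jacobi itself is
Jacobi's theorem on a `2 × 2` minor of the adjugate: multiplying `A` by the identity matrix with
its first block column replaced by that of `adjugate A` gives a block triangular matrix, and
`det A` is cancelled for the generic matrix.
-/

namespace Matrix

variable {R : Type*} [CommRing R] {m n : Type*} [Fintype m] [Fintype n] [DecidableEq m]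
  [DecidableEq n]

theorem det_mul_det_toBlocks₁₁_adjugate (A : Matrix (m ⊕ n) (m ⊕ n) R) :
    A.det * (adjugate A).toBlocks₁₁.det = A.det ^ Fintype.card m * A.toBlocks₂₂.det := by
  set B := fromBlocks (adjugate A).toBlocks₁₁ 0 (adjugate A).toBlocks₂₁ (1 : Matrix n n R)
  have hAB : A * B = fromBlocks (A.det • 1) A.toBlocks₁₂ 0 A.toBlocks₂₂ := by
    ext x (j | j)
    · have h := congrFun (congrFun (mul_adjugate A) x) (.inl j)
      rcases x with i | i <;>
        simpa [B, mul_apply, Fintype.sum_sum_type, one_apply, toBlocks₁₁, toBlocks₂₁] using h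
    · rcases x with i | i <;>
        simp [B, mul_apply, Fintype.sum_sum_type, one_apply, toBlocks₁₂, toBlocks₂₂]
  calc A.det * (adjugate A).toBlocks₁₁.det = (A * B).det := by
        rw [det_mul, det_fromBlocks_zero₁₂, det_one, mul_one]
    _ = A.det ^ Fintype.card m * A.toBlocks₂₂.det := by
        rw [hAB, det_fromBlocks_zero₂₁, det_smul, det_one, mul_one]

theorem det_toBlocks₁₁_adjugate [Nonempty m] (A : Matrix (m ⊕ n) (m ⊕ n) R) :
    (adjugate A).toBlocks₁₁.det = A.det ^ (Fintype.card m - 1) * A.toBlocks₂₂.det := by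
  let X := mvPolynomialX (m ⊕ n) (m ⊕ n) ℤ
  let f := MvPolynomial.aeval (R := ℤ) fun p : (m ⊕ n) × (m ⊕ n) => A p.1 p.2
  suffices h : (adjugate X).toBlocks₁₁.det = X.det ^ (Fintype.card m - 1) * X.toBlocks₂₂.det by
    have := congrArg f h
    rw [map_mul, map_pow, AlgHom.map_det, AlgHom.map_det, AlgHom.map_det] at this
    rw [← mvPolynomialX_mapMatrix_aeval ℤ A, ← AlgHom.map_adjugate]
    exact this
  apply mul_left_cancel₀ (det_mvPolynomialX_ne_zero (m ⊕ n) ℤ)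
  rw [det_mul_det_toBlocks₁₁_adjugate, ← mul_assoc, ← pow_succ',
    Nat.sub_add_cancel Fintype.card_pos]

noncomputable def finTwoSumEquivEnds (n : ℕ) : Fin 2 ⊕ Fin n ≃ Fin (n + 2) :=
  Equiv.ofBijective (Sum.elim ![0, Fin.last (n + 1)] fun k => k.castSucc.succ) <|
    (Fintype.bijective_iff_injective_and_card _).2
      ⟨Function.Injective.sumElim
        (by intro i j h; fin_cases i <;> fin_cases j <;> simp_all [Fin.ext_iff])
        (fun i j h => by simpa [Fin.ext_iff] using h)
        (by intro a b; fin_cases a <;> simp [Fin.ext_iff]; omega), by simp [add_comm]⟩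

variable {n : ℕ}

theorem desnanot_jacobi (A : Matrix (Fin (n + 2)) (Fin (n + 2)) R) :
    A.det * (A.submatrix (fun k : Fin n => k.castSucc.succ) fun k => k.castSucc.succ).det =
      (A.submatrix Fin.succ Fin.succ).det * (A.submatrix Fin.castSucc Fin.castSucc).det -
        (A.submatrix Fin.succ Fin.castSucc).det * (A.submatrix Fin.castSucc Fin.succ).det := by
  have h := det_toBlocks₁₁_adjugate (A.submatrix (finTwoSumEquivEnds n) (finTwoSumEquivEnds n))
  rw [adjugate_submatrix_equiv_self, det_submatrix_equiv_self, det_fin_two] at h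
  change _ = _ * (A.submatrix (fun k : Fin n => k.castSucc.succ) fun k => k.castSucc.succ).det at h
  simp only [toBlocks₁₁, finTwoSumEquivEnds, Equiv.coe_ofBijective, submatrix_apply, Sum.elim_inl,
    of_apply, cons_val_zero, cons_val_one, adjugate_fin_succ_eq_det_submatrix, Fin.succAbove_zero,
    Fin.succAbove_last, Fin.val_zero, Fin.val_last, Fintype.card_fin] at h
  have hs : ((-1 : R) ^ (n + 1)) ^ 2 = 1 := by rw [← pow_mul, pow_mul', neg_one_sq, one_pow]
  linear_combination -h + ((A.submatrix Fin.succ Fin.succ).det *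
    (A.submatrix Fin.castSucc Fin.castSucc).det - (A.submatrix Fin.succ Fin.castSucc).det *
      (A.submatrix Fin.castSucc Fin.succ).det) * hs

end Matrix

open Matrix

/-- `Sum.inl i` is the `i`-th lateral and `Sum.inr l` the `l`-th intrusive index (both `1`-based),
so that `Q(a,b,c,d,p)` is the submatrix of `qKernel (b + c) c p` on the laterals `1, …, a` and the
intrusives `1, …, d`. -/
def qKernel (m c p : ℤ) : Matrix (ℤ ⊕ ℤ) (ℤ ⊕ ℤ) ℚ :=
  fromBlocks (of fun i j => ibinom m (c - i + j)) (of fun i l => ibinom (2 * l - 1) (l - i + p))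
    (of fun l j => ibinom (m - 2 * l + 1) (c - l + j - p))
    (of fun l l' => ibinom (2 * (l' - l)) (l' - l))

def qIndex (a k : ℕ) : ℤ ⊕ ℤ :=
  if k < a then .inl (k + 1) else .inr (k - a + 1)

theorem Qmat_eq_submatrix_qKernel (a b c d : ℕ) (p : ℤ) :
    Qmat a b c d p = (qKernel (b + c) c p).submatrix (fun k : Fin (a + d) => qIndex a k)
      fun k : Fin (a + d) => qIndex a k := by
  ext i j
  simp only [Qmat, qIndex, of_apply, submatrix_apply]
  split_ifs <;> simp only [qKernel, fromBlocks_apply₁₁, fromBlocks_apply₁₂, fromBlocks_apply₂₁,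
    fromBlocks_apply₂₂, of_apply]
  congr 1 <;> ring

theorem E_eq_det_qKernel {a b c d m : ℕ} {p M C : ℤ} (hm : a + d = m) (hM : M = b + c)
    (hC : C = c) :
    E a b c d p = ((qKernel M C p).submatrix (fun k : Fin m => qIndex a k)
      fun k : Fin m => qIndex a k).det := by
  subst hm hM hC
  rw [E, Qmat_eq_submatrix_qKernel]

theorem E_eq_det_qKernel_perm {a b c d m : ℕ} {p M C : ℤ} (σ : Equiv.Perm (Fin m))
    (hm : a + d = m) (hM : M = b + c) (hC : C = c) :
    E a b c d p =
      ((qKernel M C p).submatrix (fun k => qIndex a (σ k)) fun k => qIndex a (σ k)).det := by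
  rw [E_eq_det_qKernel hm hM hC]
  exact (det_submatrix_equiv_self σ
    ((qKernel M C p).submatrix (fun k : Fin m => qIndex a k) fun k => qIndex a k)).symm

def lateralShift : ℤ ⊕ ℤ → ℤ ⊕ ℤ := Sum.map (· + 1) id

section
variable {ι κ : Type*} (m c p : ℤ) (u : ι → ℤ ⊕ ℤ) (v : κ → ℤ ⊕ ℤ)

theorem qKernel_submatrix_lateralShift_left :
    (qKernel m c p).submatrix (lateralShift ∘ u) v = (qKernel m (c - 1) (p - 1)).submatrix u v := by
  ext i j
  simp only [submatrix_apply, Function.comp_apply]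
  rcases u i with x | x <;> rcases v j with y | y <;>
    simp only [lateralShift, Sum.map_inl, Sum.map_inr, id, qKernel, fromBlocks_apply₁₁,
      fromBlocks_apply₁₂, fromBlocks_apply₂₁, fromBlocks_apply₂₂, of_apply] <;> ring_nf

theorem qKernel_submatrix_lateralShift_right :
    (qKernel m c p).submatrix u (lateralShift ∘ v) = (qKernel m (c + 1) p).submatrix u v := by
  ext i j
  simp only [submatrix_apply, Function.comp_apply]
  rcases u i with x | x <;> rcases v j with y | y <;>
    simp only [lateralShift, Sum.map_inl, Sum.map_inr, id, qKernel, fromBlocks_apply₁₁,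
      fromBlocks_apply₁₂, fromBlocks_apply₂₁, fromBlocks_apply₂₂, of_apply] <;> ring_nf

end

theorem cons_lateralShift_qIndex (m a : ℕ) :
    Fin.cons (.inl 1) (lateralShift ∘ fun k : Fin m => qIndex a k) =
      fun k : Fin (m + 1) => qIndex (a + 1) k := by
  ext k
  cases k using Fin.cases with
  | zero => simp [qIndex]
  | succ k =>
    simp only [Fin.cons_succ, Function.comp_apply, Fin.val_succ, qIndex, lateralShift]
    split_ifs <;> first | omega | simp

theorem exists_perm_snoc_qIndex {m a : ℕ} (ha : a ≤ m) :
    ∃ σ : Equiv.Perm (Fin (m + 1)),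
      Fin.snoc (fun k : Fin m => qIndex a k) (.inl (a + 1)) = fun k => qIndex (a + 1) (σ k) := by
  refine ⟨finSuccEquivLast.trans (finSuccEquiv' ⟨a, by omega⟩).symm, ?_⟩
  ext k
  cases k using Fin.lastCases with
  | last => simp [qIndex]
  | cast k =>
    simp only [Fin.snoc_castSucc, Equiv.trans_apply, finSuccEquivLast_castSucc,
      finSuccEquiv'_symm_some, qIndex]
    rcases lt_or_ge (k : ℕ) a with hk | hk
    · rw [Fin.succAbove_of_castSucc_lt _ _ (by simpa [Fin.lt_def] using hk)]
      simp [hk, Nat.lt_succ_of_lt hk]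
    · rw [Fin.succAbove_of_le_castSucc _ _ (by simpa [Fin.le_def] using hk)]
      simp [Nat.not_lt.2 hk]

/-- The indices of `Q(a + 2, b, c, d, p)` listed with the first and the last lateral one at the two
ends. -/
def endsIndex (a d : ℕ) : Fin (a + d + 2) → ℤ ⊕ ℤ :=
  Fin.cons (.inl 1) (Fin.snoc (lateralShift ∘ fun k : Fin (a + d) => qIndex a k) (.inl (a + 2)))

section EndsIndex

variable (a d : ℕ)

theorem endsIndex_comp_castSucc_succ :
    (endsIndex a d ∘ fun k : Fin (a + d) => k.castSucc.succ) =
      lateralShift ∘ fun k : Fin (a + d) => qIndex a k := by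
  ext k
  simp [endsIndex]

theorem endsIndex_comp_castSucc :
    endsIndex a d ∘ Fin.castSucc = fun k : Fin (a + d + 1) => qIndex (a + 1) k := by
  rw [endsIndex, Fin.cons_snoc_eq_snoc_cons, Fin.snoc_comp_castSucc]
  exact cons_lateralShift_qIndex _ _

theorem exists_perm_endsIndex_comp_succ :
    ∃ σ : Equiv.Perm (Fin (a + d + 1)),
      endsIndex a d ∘ Fin.succ = lateralShift ∘ fun k => qIndex (a + 1) (σ k) := by
  obtain ⟨σ, hσ⟩ := exists_perm_snoc_qIndex (m := a + d) (a := a) (by omega)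
  refine ⟨σ, ?_⟩
  rw [endsIndex, Fin.cons_comp_succ, ← hσ, Fin.comp_snoc]
  congr 1

theorem exists_perm_endsIndex :
    ∃ τ : Equiv.Perm (Fin (a + d + 2)), endsIndex a d = fun k => qIndex (a + 2) (τ k) := by
  obtain ⟨τ, hτ⟩ := exists_perm_snoc_qIndex (m := a + d + 1) (a := a + 1) (by omega)
  refine ⟨τ, ?_⟩
  rw [endsIndex, Fin.cons_snoc_eq_snoc_cons, cons_lateralShift_qIndex]
  convert hτ using 3
  push_cast
  ring

end EndsIndex

section Minors

variable (a b c d : ℕ) (p : ℤ)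

theorem det_submatrix_endsIndex :
    ((qKernel (b + c) c p).submatrix (endsIndex a d) (endsIndex a d)).det = E (a + 2) b c d p := by
  obtain ⟨τ, hτ⟩ := exists_perm_endsIndex a d
  rw [hτ, E_eq_det_qKernel_perm τ (M := b + c) (C := c) (by omega) rfl rfl]

theorem det_submatrix_endsIndex_comp_castSucc_succ :
    ((qKernel (b + c) c p).submatrix (endsIndex a d ∘ fun k : Fin (a + d) => k.castSucc.succ)
      (endsIndex a d ∘ fun k : Fin (a + d) => k.castSucc.succ)).det = E a b c d (p - 1) := by
  rw [endsIndex_comp_castSucc_succ, qKernel_submatrix_lateralShift_left,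
    qKernel_submatrix_lateralShift_right,
    E_eq_det_qKernel (m := a + d) (M := b + c) (C := c - 1 + 1) rfl rfl (sub_add_cancel _ _)]

theorem det_submatrix_endsIndex_comp_succ :
    ((qKernel (b + c) c p).submatrix (endsIndex a d ∘ Fin.succ) (endsIndex a d ∘ Fin.succ)).det =
      E (a + 1) b c d (p - 1) := by
  obtain ⟨σ, hσ⟩ := exists_perm_endsIndex_comp_succ a d
  rw [hσ, qKernel_submatrix_lateralShift_left, qKernel_submatrix_lateralShift_right,
    E_eq_det_qKernel_perm σ (M := b + c) (C := c - 1 + 1) (by omega) rfl (sub_add_cancel _ _)]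

theorem det_submatrix_endsIndex_comp_castSucc :
    ((qKernel (b + c) c p).submatrix (endsIndex a d ∘ Fin.castSucc)
      (endsIndex a d ∘ Fin.castSucc)).det = E (a + 1) b c d p := by
  rw [endsIndex_comp_castSucc,
    E_eq_det_qKernel (m := a + d + 1) (M := b + c) (C := c) (by omega) rfl rfl]

theorem det_submatrix_endsIndex_succ_castSucc_mul (hb : 1 ≤ b) (hc : 1 ≤ c) :
    ((qKernel (b + c) c p).submatrix (endsIndex a d ∘ Fin.succ)
        (endsIndex a d ∘ Fin.castSucc)).det *
      ((qKernel (b + c) c p).submatrix (endsIndex a d ∘ Fin.castSucc)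
        (endsIndex a d ∘ Fin.succ)).det =
      E (a + 1) (b + 1) (c - 1) d (p - 1) * E (a + 1) (b - 1) (c + 1) d p := by
  obtain ⟨σ, hσ⟩ := exists_perm_endsIndex_comp_succ a d
  rw [hσ, endsIndex_comp_castSucc, qKernel_submatrix_lateralShift_left,
    qKernel_submatrix_lateralShift_right,
    E_eq_det_qKernel (m := a + d + 1) (M := b + c) (C := c - 1) (by omega) (by omega) (by omega),
    E_eq_det_qKernel (m := a + d + 1) (M := b + c) (C := c + 1) (by omega) (by omega) (by omega)]
  set M₁ := (qKernel (b + c) (c - 1) (p - 1)).submatrix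
    (fun k : Fin (a + d + 1) => qIndex (a + 1) k) fun k : Fin (a + d + 1) => qIndex (a + 1) k
  set M₂ := (qKernel (b + c) (c + 1) p).submatrix
    (fun k : Fin (a + d + 1) => qIndex (a + 1) k) fun k : Fin (a + d + 1) => qIndex (a + 1) k
  change (M₁.submatrix σ id).det * (M₂.submatrix id σ).det = M₁.det * M₂.det
  rw [det_permute, det_permute']
  rcases Int.units_eq_one_or (Equiv.Perm.sign σ) with h | h <;> simp [h]

end Minors

/-- Dodgson condensation specialized to `E(a,b,c,d,p)`. -/
theorem dodgson_for_E (a b c d : ℕ) (p : ℤ) (ha : 2 ≤ a) (hb : 1 ≤ b) (hc : 1 ≤ c) :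
    E a b c d p * E (a - 2) b c d (p - 1) =
      E (a - 1) b c d (p - 1) * E (a - 1) b c d p -
        E (a - 1) (b + 1) (c - 1) d (p - 1) * E (a - 1) (b - 1) (c + 1) d p := by
  obtain ⟨a, rfl⟩ : ∃ a', a = a' + 2 := ⟨a - 2, by omega⟩
  rw [show a + 2 - 1 = a + 1 by omega, Nat.add_sub_cancel]
  have h := desnanot_jacobi ((qKernel (b + c) c p).submatrix (endsIndex a d) (endsIndex a d))
  simp only [submatrix_submatrix] at h
  rwa [det_submatrix_endsIndex, det_submatrix_endsIndex_comp_castSucc_succ,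
    det_submatrix_endsIndex_comp_succ, det_submatrix_endsIndex_comp_castSucc,
    det_submatrix_endsIndex_succ_castSucc_mul a b c d p hb hc] at h
end
end

section
/- Let a, b, c, d be nonnegative integers and let p be an integer. Then E(a,b,c,d,p) = E(a,c,b,d,a−p). (Reflection of the damaged hexagon at a vertical axis.) -/
open Finset

noncomputable section

/-!
Reversing the order of the lateral rows and columns (`i ↦ a + 1 - i` for `i ≤ a`) turns
`Q(a,b,c,d,p)` into `Q(a,c,b,d,a-p)` entry by entry, through the symmetry
`C(n,k) = C(n,n-k)`; the simultaneous row and column permutation does not change the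
determinant.
-/

theorem ibinom_symm (n k : ℤ) : ibinom n k = ibinom n (n - k) := by
  unfold ibinom
  by_cases h : 0 ≤ k ∧ k ≤ n
  · rw [if_pos h, if_pos (by omega), show (n - k).toNat = n.toNat - k.toNat by omega,
      Nat.choose_symm (by omega)]
  · rw [if_neg h, if_neg (by omega)]

theorem ibinom_eq_of_add_eq {n n' k k' : ℤ} (hn : n = n') (hk : k + k' = n) :
    ibinom n k = ibinom n' k' := by
  rw [ibinom_symm, ← hn, show n - k = k' by omega]

def reverseLateral (a d : ℕ) (i : Fin (a + d)) : Fin (a + d) :=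
  if (i : ℕ) < a then ⟨a - 1 - i, by omega⟩ else i

theorem reverseLateral_involutive (a d : ℕ) : Function.Involutive (reverseLateral a d) := by
  intro i
  unfold reverseLateral
  split_ifs <;> simp only [Fin.ext_iff] at * <;> omega

theorem Qmat_submatrix_reverseLateral (a b c d : ℕ) (p : ℤ) :
    (Qmat a b c d p).submatrix (reverseLateral a d) (reverseLateral a d) =
      Qmat a c b d ((a : ℤ) - p) := by
  ext i j
  have reflected_lt {k : ℕ} (hk : k < a) : a - 1 - k < a := by omega
  simp only [Qmat, Matrix.submatrix_apply, Matrix.of_apply, reverseLateral]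
  by_cases hi : (i : ℕ) < a <;> by_cases hj : (j : ℕ) < a <;>
    simp only [hi, hj, reflected_lt, if_true, if_false] <;>
    first
    | rfl
    | exact ibinom_eq_of_add_eq (by omega) (by omega)

/-- Reflection of the damaged hexagon at a vertical axis. -/
theorem E_symmetry (a b c d : ℕ) (p : ℤ) :
    E a b c d p = E a c b d ((a : ℤ) - p) := by
  rw [E, E, ← Qmat_submatrix_reverseLateral,
    ← (reverseLateral_involutive a d).coe_toPerm, Matrix.det_submatrix_equiv_self]
end
end

section
/- Let a, c be positive integers and b a nonnegative integer. Then ∑_{k=0}^{a−1} (−1)^{a+k−1} · C(a−1, k) · (b+k+2−a)_{a−1} / (a+c−k−1) = (a−1)! · (c−1)! · (a+b+c−1)! / ( (a+c−1)! · (b+c)! ), where the sum is over rationals and (x)_n denotes the Pochhammer symbol (rising factorial), evaluated at the (possibly negative) integer argument b+k+2−a. -/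
/-!
With `n = a - 1`, reflecting `k ↦ n - k` turns the sum into
`(-1)^n ∑ₖ (-1)^(n-k) C(n,k) R(k) / (c + k)`, where `R(y) = (b + 1 - y)_n` has degree `n`.
Write `R(y) = R(-c) + (y + c) Q(y)` with `deg Q < n`. The alternating binomial sum is the
`n`-th forward difference at `0`, which kills `Q`, while iterating
`Δ (1 / (c + k)_m) = -m / (c + k)_(m+1)` gives `Δⁿ (1 / (c + k)) = (-1)^n n! / (c + k)_(n+1)`.
So the sum is `n! (b + c + 1)_n / (c)_(n+1)`, which is the factorial quotient.
-/

open Finset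

noncomputable section

open Polynomial fwdDiff

theorem sum_neg_one_pow_mul_choose_mul_eval_eq_zero {R : Type*} [CommRing R] {P : R[X]} {n : ℕ}
    (hP : P.degree < n) :
    ∑ k ∈ range (n + 1), (-1 : R) ^ (n - k) * n.choose k * P.eval (k : R) = 0 := by
  rcases eq_or_ne P 0 with rfl | hP0
  · simp
  have h := congrFun (fwdDiff_iter_eq_zero_of_degree_lt
    ((natDegree_lt_iff_degree_lt hP0).mpr hP)) 0
  rw [fwdDiff_iter_eq_sum_shift] at h
  simpa [zsmul_eq_mul, mul_assoc] using h

theorem natDegree_ascPochhammer_comp_C_sub_X {R : Type*} [CommRing R] [IsDomain R] (n : ℕ) (r : R) :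
    ((ascPochhammer R n).comp (C r - X)).natDegree = n := by
  rw [natDegree_comp, ascPochhammer_natDegree, natDegree_sub_eq_right_of_natDegree_lt
    (by rw [natDegree_C, natDegree_X]; exact one_pos), natDegree_X, mul_one]

section
variable {K : Type*} [Field K] {x : K}

theorem ascPochhammer_eval_add_natCast_ne_zero (hx : ∀ k : ℕ, x + k ≠ 0) (m k : ℕ) :
    (ascPochhammer K m).eval (x + k) ≠ 0 := by
  rw [Ne, ascPochhammer_eval_eq_zero_iff]
  rintro ⟨j, -, hj⟩
  exact hx (j + k) (by push_cast; linear_combination hj)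

/- The differences are taken over `ℕ`, not `K`: by `hx` no denominator vanishes there, so the
identity holds at every point despite `0⁻¹ = 0`. -/
theorem fwdDiff_inv_ascPochhammer_eval (hx : ∀ k : ℕ, x + k ≠ 0) (m : ℕ) :
    Δ_[1] (fun k : ℕ ↦ ((ascPochhammer K m).eval (x + k))⁻¹) =
      (-m : K) • fun k : ℕ ↦ ((ascPochhammer K (m + 1)).eval (x + k))⁻¹ := by
  ext k
  have hk := ascPochhammer_eval_add_natCast_ne_zero hx m k
  have hk_succ := ascPochhammer_eval_add_natCast_ne_zero hx m (k + 1)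
  have hleft : (ascPochhammer K (m + 1)).eval (x + k) =
      (x + k) * (ascPochhammer K m).eval (x + (k + 1 : ℕ)) := by
    rw [ascPochhammer_succ_left]
    push_cast
    simp only [eval_mul, eval_X, eval_comp, eval_add, eval_one, add_assoc]
  have hright := ascPochhammer_succ_eval m (x + k)
  have hxk := hx k
  simp only [fwdDiff, Pi.smul_apply, smul_eq_mul]
  rw [hleft]
  field_simp
  linear_combination hleft - hright

theorem fwdDiff_iter_inv_add_natCast (hx : ∀ k : ℕ, x + k ≠ 0) (n : ℕ) :
    (Δ_[1])^[n] (fun k : ℕ ↦ (x + k)⁻¹) =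
      ((-1) ^ n * n.factorial : K) • fun k : ℕ ↦ ((ascPochhammer K (n + 1)).eval (x + k))⁻¹ := by
  induction n with
  | zero => ext; simp
  | succ n ih =>
    rw [Function.iterate_succ_apply', ih, fwdDiff_const_smul, fwdDiff_inv_ascPochhammer_eval hx,
      smul_smul]
    push_cast [Nat.factorial_succ, pow_succ]
    ring_nf

theorem sum_neg_one_pow_mul_choose_div_add (hx : ∀ k : ℕ, x + k ≠ 0) (n : ℕ) :
    ∑ k ∈ range (n + 1), (-1 : K) ^ (n - k) * n.choose k / (x + k) =
      (-1) ^ n * n.factorial / (ascPochhammer K (n + 1)).eval x := by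
  have h := congrFun (fwdDiff_iter_inv_add_natCast hx n) 0
  rw [fwdDiff_iter_eq_sum_shift] at h
  simpa [zsmul_eq_mul, div_eq_mul_inv, mul_assoc] using h

theorem sum_neg_one_pow_mul_choose_mul_eval_div_add (hx : ∀ k : ℕ, x + k ≠ 0) {n : ℕ} {P : K[X]}
    (hP : P.degree ≤ n) :
    ∑ k ∈ range (n + 1), (-1 : K) ^ (n - k) * n.choose k * P.eval (k : K) / (x + k) =
      (-1) ^ n * n.factorial * P.eval (-x) / (ascPochhammer K (n + 1)).eval x := by
  set Q := P /ₘ (X - C (-x))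
  have hQ : Q.degree < n := by
    rcases eq_or_ne P 0 with rfl | hP0
    · simp [Q]
    exact (degree_divByMonic_lt _ _ hP0 (by simp)).trans_le hP
  have hsplit (k : ℕ) : P.eval (k : K) / (x + k) = P.eval (-x) / (x + k) + Q.eval (k : K) := by
    have h := congrArg (eval (k : K)) (modByMonic_add_div P (X - C (-x)))
    rw [modByMonic_X_sub_C_eq_C_eval] at h
    simp only [eval_add, eval_C, eval_mul, eval_sub, eval_X, sub_neg_eq_add] at h
    field_simp [hx k]
    linear_combination -h
  calc ∑ k ∈ range (n + 1), (-1 : K) ^ (n - k) * n.choose k * P.eval (k : K) / (x + k)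
      = P.eval (-x) * ∑ k ∈ range (n + 1), (-1 : K) ^ (n - k) * n.choose k / (x + k) +
          ∑ k ∈ range (n + 1), (-1 : K) ^ (n - k) * n.choose k * Q.eval (k : K) := by
        rw [mul_sum, ← sum_add_distrib]
        refine sum_congr rfl fun k _ ↦ ?_
        rw [mul_div_assoc, hsplit]
        ring
    _ = (-1) ^ n * n.factorial * P.eval (-x) / (ascPochhammer K (n + 1)).eval x := by
        rw [sum_neg_one_pow_mul_choose_div_add hx, sum_neg_one_pow_mul_choose_mul_eval_eq_zero hQ]
        ring

end

theorem sum_neg_one_pow_mul_choose_mul_poch_div_reflect (n b c : ℕ) :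
    ∑ k ∈ range (n + 1),
        (-1 : ℚ) ^ (n + k) * n.choose k * poch ((b : ℚ) + k + 1 - n) n / ((n : ℚ) + c - k) =
      (-1) ^ n * ∑ k ∈ range (n + 1), (-1 : ℚ) ^ (n - k) * n.choose k *
        ((ascPochhammer ℚ n).comp (C ((b : ℚ) + 1) - X)).eval (k : ℚ) / (c + k) := by
  rw [← sum_range_reflect, mul_sum]
  refine sum_congr rfl fun k hk ↦ ?_
  have hkn : k ≤ n := Nat.lt_succ_iff.mp (mem_range.mp hk)
  rw [Nat.add_sub_cancel, Nat.choose_symm hkn, pow_add, poch, eval_comp, eval_sub, eval_C, eval_X]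
  push_cast [hkn]
  ring_nf

/-- Summation formula for `S_a` (found by Zeilberger's algorithm). -/
theorem zeilberger_sum (a b c : ℕ) (ha : 0 < a) (hc : 0 < c) :
    ∑ k ∈ Finset.range a,
        (-1 : ℚ) ^ (a + k - 1) * (Nat.choose (a - 1) k : ℚ) *
          poch ((b : ℚ) + k + 2 - a) (a - 1) / ((a : ℚ) + c - k - 1) =
      (Nat.factorial (a - 1) : ℚ) * (Nat.factorial (c - 1) : ℚ) *
          (Nat.factorial (a + b + c - 1) : ℚ) /
        ((Nat.factorial (a + c - 1) : ℚ) * (Nat.factorial (b + c) : ℚ)) := by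
  obtain ⟨n, rfl⟩ : ∃ n, a = n + 1 := ⟨a - 1, by omega⟩
  have hsum := sum_neg_one_pow_mul_choose_mul_poch_div_reflect n b c
  rw [sum_neg_one_pow_mul_choose_mul_eval_div_add (fun k ↦ by positivity)
    (degree_le_of_natDegree_le (natDegree_ascPochhammer_comp_C_sub_X n _).le), ← mul_div_assoc,
    ← mul_assoc, ← mul_assoc, ← pow_add, Even.neg_one_pow ⟨n, rfl⟩, one_mul] at hsum
  have hc_fact : ((c - 1).factorial : ℚ) * (ascPochhammer ℚ (n + 1)).eval (c : ℚ) =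
      (n + c).factorial := by
    rw [show (c : ℚ) = ((c - 1 : ℕ) : ℚ) + 1 by rw [Nat.cast_sub hc]; ring,
      factorial_mul_ascPochhammer, show c - 1 + (n + 1) = n + c by omega]
  have hbc_fact : ((b + c).factorial : ℚ) *
      ((ascPochhammer ℚ n).comp (C ((b : ℚ) + 1) - X)).eval (-c : ℚ) = (n + b + c).factorial := by
    rw [eval_comp, eval_sub, eval_C, eval_X,
      show (b : ℚ) + 1 - -c = ((b + c : ℕ) : ℚ) + 1 by push_cast; ring,
      factorial_mul_ascPochhammer, show b + c + n = n + b + c by omega]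
  have hpos := ascPochhammer_pos (n + 1) (c : ℚ) (by positivity)
  rw [show n + 1 + b + c - 1 = n + b + c by omega, show n + 1 + c - 1 = n + c by omega,
    Nat.add_sub_cancel, ← hc_fact, ← hbc_fact]
  convert hsum using 1
  · refine sum_congr rfl fun k _ ↦ ?_
    rw [show n + 1 + k - 1 = n + k by omega]
    push_cast
    ring_nf
  · field_simp
end
end

section
/- Let a, b, c be positive integers with b ≥ 2 and c ≥ 2. Then b! · ∑_{t=0}^{a−1} (−1)^t · (b−t)_{c+t} · ∑_{k=t}^{a−1} (b)_{k−t} · C(k, t) · C(c+k−1, k) / (b+c+k)! = 1 − (c)_a / (b+c)_a, where the sums are over the rationals, (x)_n denotes the Pochhammer symbol (rising factorial) evaluated at the (possibly negative) integer argument b−t, and C(n,k) is the binomial coefficient (equal to 0 for k < 0 or k > n). -/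
open Finset

noncomputable section

/-!
Swapping the two sums, the coefficient of the `k`-th summand becomes an alternating sum over `t`.
The reflection `(b - t)_t = (-1)^t (1 - b)_t` turns it into the Chu–Vandermonde expansion of
`(1)_k = k!`, and what is left is `r k - r (k + 1)` with `r n = (c)_n / (b + c)_n`, so the sum
telescopes to `r 0 - r a = 1 - r a`.
-/

open Polynomial
open scoped Nat

lemma poch_zero (x : ℚ) : poch x 0 = 1 := by simp [poch]

lemma poch_succ (x : ℚ) (n : ℕ) : poch x (n + 1) = poch x n * (x + n) :=
  ascPochhammer_succ_eval n x

lemma poch_one (n : ℕ) : poch 1 n = n ! := ascPochhammer_eval_one ℚ n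

lemma poch_add (x : ℚ) (m n : ℕ) : poch x (m + n) = poch x m * poch (x + m) n := by
  simpa [poch, eval_comp] using (congrArg (eval x) (ascPochhammer_mul ℚ m n)).symm

lemma poch_natCast (n k : ℕ) : poch n k = n.ascFactorial k :=
  ascPochhammer_nat_eq_natCast_ascFactorial ℚ n k

lemma poch_eq_neg_one_pow_mul_descPochhammer (x : ℚ) (n : ℕ) :
    poch x n = (-1) ^ n * (descPochhammer ℤ n).smeval (-x) := by
  have h := ascPochhammer_smeval_neg_eq_descPochhammer (-x) n
  rw [neg_neg, ascPochhammer_smeval_eq_eval, Int.negOnePow_def, Units.smul_def, zsmul_eq_mul] at h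
  simpa [poch] using h

lemma poch_sub_self (x : ℚ) (n : ℕ) : poch (x - n) n = (-1) ^ n * poch (1 - x) n := by
  rw [poch_eq_neg_one_pow_mul_descPochhammer, descPochhammer_smeval_eq_ascPochhammer,
    ascPochhammer_smeval_eq_eval, poch]
  ring_nf

lemma poch_vandermonde (x y : ℚ) (n : ℕ) :
    poch (x + y) n = ∑ ij ∈ antidiagonal n, (n.choose ij.1 : ℚ) * (poch x ij.1 * poch y ij.2) := by
  have h := Ring.descPochhammer_smeval_add (r := -x) (s := -y) n (Commute.all _ _)
  rw [poch_eq_neg_one_pow_mul_descPochhammer, neg_add, h, mul_sum]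
  refine sum_congr rfl fun ij hij => ?_
  rw [poch_eq_neg_one_pow_mul_descPochhammer, poch_eq_neg_one_pow_mul_descPochhammer,
    ← mem_antidiagonal.mp hij]
  ring

lemma sum_neg_one_pow_mul_poch_sub_mul_poch_choose (x : ℚ) (a c : ℕ) :
    ∑ t ∈ range (a + 1), (-1) ^ t * poch (x - t) (c + t) * (poch x (a - t) * (a.choose t : ℚ)) =
      a ! * poch x c := by
  have hterm (t : ℕ) : (-1) ^ t * poch (x - t) (c + t) = poch (1 - x) t * poch x c := by
    rw [add_comm, poch_add, sub_add_cancel, poch_sub_self, ← mul_assoc, ← mul_assoc, ← mul_pow,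
      neg_one_mul, neg_neg, one_pow, one_mul]
  have hvandermonde := poch_vandermonde (1 - x) x a
  rw [sub_add_cancel, poch_one, Nat.sum_antidiagonal_eq_sum_range_succ_mk] at hvandermonde
  simp only [hterm, hvandermonde, sum_mul]
  exact sum_congr rfl fun _ _ => by ring

lemma poch_div_poch_sub_poch_div_poch_succ (x y : ℚ) (n : ℕ) (h : poch (x + y) (n + 1) ≠ 0) :
    poch y n / poch (x + y) n - poch y (n + 1) / poch (x + y) (n + 1) =
      x * poch y n / poch (x + y) (n + 1) := by
  rw [poch_succ] at h
  have hn : poch (x + y) n ≠ 0 := left_ne_zero_of_mul h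
  have hs : x + y + n ≠ 0 := right_ne_zero_of_mul h
  rw [poch_succ, poch_succ]
  field_simp
  ring

lemma factorial_mul_poch_natCast_succ (b n : ℕ) (hb : 0 < b) :
    (b ! : ℚ) * poch b (n + 1) = b * (b + n)! := by
  have h := Nat.factorial_mul_ascFactorial' b (n + 1) hb
  rw [← Nat.add_assoc, Nat.add_sub_cancel] at h
  rw [poch_natCast, ← h, ← Nat.mul_factorial_pred hb.ne']
  push_cast
  ring

lemma factorial_mul_sum_eq_poch_div_poch_sub_succ (b c k : ℕ) (hb : 0 < b) :
    (b ! : ℚ) * ∑ t ∈ range (k + 1), (-1) ^ t * poch ((b : ℚ) - t) (c + t) *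
        (poch (b : ℚ) (k - t) * (k.choose t : ℚ) * ((c + k - 1).choose k : ℚ) /
          ((b + c + k)! : ℚ)) =
      poch c k / poch ((b : ℚ) + c) k - poch c (k + 1) / poch ((b : ℚ) + c) (k + 1) := by
  have hsum : ∑ t ∈ range (k + 1), (-1) ^ t * poch ((b : ℚ) - t) (c + t) *
        (poch (b : ℚ) (k - t) * (k.choose t : ℚ) * ((c + k - 1).choose k : ℚ) /
          ((b + c + k)! : ℚ)) =
      k ! * poch b c * ((c + k - 1).choose k : ℚ) / (b + c + k)! := by
    rw [← sum_neg_one_pow_mul_poch_sub_mul_poch_choose, sum_mul, sum_div]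
    exact sum_congr rfl fun _ _ => by ring
  have hchoose : (k ! : ℚ) * ((c + k - 1).choose k : ℚ) = poch c k := by
    rw [poch_natCast, Nat.ascFactorial_eq_factorial_mul_choose']
    push_cast
    ring
  have hfactorial : (b ! : ℚ) * poch b c * poch ((b : ℚ) + c) (k + 1) = b * (b + c + k)! := by
    rw [mul_assoc, ← poch_add]
    simpa only [Nat.add_assoc] using factorial_mul_poch_natCast_succ b (c + k) hb
  have hpoch : poch ((b : ℚ) + c) (k + 1) ≠ 0 := by
    have : (0 : ℚ) < b := by exact_mod_cast hb
    exact (ascPochhammer_pos _ _ (by positivity)).ne'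
  rw [poch_div_poch_sub_poch_div_poch_succ _ _ _ hpoch, hsum, ← hchoose, mul_div_assoc',
    div_eq_div_iff (by positivity) hpoch]
  linear_combination (k ! : ℚ) * ((c + k - 1).choose k : ℚ) * hfactorial

theorem sum_formula_p_zero_general (a b c : ℕ) (hb : 2 ≤ b) :
    (Nat.factorial b : ℚ) *
        ∑ t ∈ Finset.range a,
          (-1 : ℚ) ^ t * poch ((b : ℚ) - t) (c + t) *
            ∑ k ∈ Finset.Ico t a,
              poch (b : ℚ) (k - t) * (Nat.choose k t : ℚ) * (Nat.choose (c + k - 1) k : ℚ) /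
                (Nat.factorial (b + c + k) : ℚ) =
      1 - poch (c : ℚ) a / poch ((b : ℚ) + c) a := by
  calc _ = ∑ k ∈ range a, (b ! : ℚ) * ∑ t ∈ range (k + 1),
          (-1) ^ t * poch ((b : ℚ) - t) (c + t) *
            (poch (b : ℚ) (k - t) * (k.choose t : ℚ) * ((c + k - 1).choose k : ℚ) /
              ((b + c + k)! : ℚ)) := by
        simp only [mul_sum, range_eq_Ico]
        exact sum_Ico_Ico_comm 0 a _
    _ = ∑ k ∈ range a,
          (poch c k / poch ((b : ℚ) + c) k - poch c (k + 1) / poch ((b : ℚ) + c) (k + 1)) :=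
        sum_congr rfl fun k _ => factorial_mul_sum_eq_poch_div_poch_sub_succ b c k (by omega)
    _ = _ := by rw [sum_range_sub', poch_zero, poch_zero, div_one]

/-- The `p = 0` case of the summation identity obtained from the Schur-complement
evaluation of `E(a,b,c,1,p)`. -/
theorem sum_formula_p_zero (a b c : ℕ) (ha : 0 < a) (hb : 2 ≤ b) (hc : 2 ≤ c) :
    (Nat.factorial b : ℚ) *
        ∑ t ∈ Finset.range a,
          (-1 : ℚ) ^ t * poch ((b : ℚ) - t) (c + t) *
            ∑ k ∈ Finset.Ico t a,
              poch (b : ℚ) (k - t) * (Nat.choose k t : ℚ) * (Nat.choose (c + k - 1) k : ℚ) /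
                (Nat.factorial (b + c + k) : ℚ) =
      1 - poch (c : ℚ) a / poch ((b : ℚ) + c) a :=
  sum_formula_p_zero_general a b c hb
end
end
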